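/- arXiv:2012.09391 — 2 statements merged into one kernel-verified Lean document; each statement's English description precedes it below -/
import Mathlib

section
/- Let Γ be an amply regular graph with parameters (v,k,λ,μ), smallest eigenvalue -m with m ≥ 1, and μ > m(m-1). Suppose Γ has a maximal clique C of order c > μ²/(μ - m(m-1)) - m + 1 with c - 1 < k. Then ((c+m-3)(k-c+1) - 2(c-1)(λ-c+2))² - (k-c+1)²·(c+m-1)(c-(m-1)(4m-1)) ≥ 0. -/
/-!
Since `-m` is the least eigenvalue, `A + m I` is positive semidefinite. For a vertex `y` outside
the clique `C`, let `e` be the number of its neighbours in `C`. Testing `A + m I` on vectors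
supported on `C ∪ {y}` that are constant on the neighbours and on the non-neighbours of `y` in `C`
gives `e (c + m - 1 - e) ≤ m (m - 1) (c + m - 1)`, i.e. `e` is not strictly between the roots
`(c + m - 1 ± √D) / 2`, where `D = (c + m - 1) (c - (m - 1) (4 m - 1))`. Maximality of `C` gives `e ≤ μ` whenever `e > 0`, and the lower bound on
`c` puts `μ` below the larger root, so `2 e ≤ c + m - 1 - √D`. Summing
`e (e - 1) ≤ ((c + m - 1 - √D) / 2 - 1) e` over `y ∉ C`, where double counting gives
`∑ e = c (k - c + 1)` and `∑ e (e - 1) = c (c - 1) (λ - c + 2)`, yields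
`(k - c + 1) √D ≤ (c + m - 3) (k - c + 1) - 2 (c - 1) (λ - c + 2)`; square both sides.
-/

open Finset Matrix Pointwise

theorem Matrix.IsHermitian.posSemidef_add_smul_one {n : Type*} [Fintype n] [DecidableEq n]
    {A : Matrix n n ℝ} (hA : A.IsHermitian) {m : ℝ} (hm : ∀ x ∈ spectrum ℝ A, -m ≤ x) :
    (A + m • 1).PosSemidef := by
  have hAm : (A + m • 1).IsHermitian := hA.add (isHermitian_one.smul (IsSelfAdjoint.all m))
  have hspec : spectrum ℝ (A + m • 1) = spectrum ℝ A + ({m} : Set ℝ) := by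
    rw [← Algebra.algebraMap_eq_smul_one, spectrum.add_singleton_eq]
  refine hAm.posSemidef_iff_eigenvalues_nonneg.mpr fun i => ?_
  obtain ⟨x, hx, _, rfl, hxi⟩ := hspec ▸ hAm.eigenvalues_mem_spectrum_real i
  simp only [Pi.zero_apply, ← hxi]
  linarith [hm x hx]

theorem two_mul_le_sub_sqrt_of_mul_sub_le {N p e : ℝ} (he : e * (N - e) ≤ p)
    (hlt : 2 * e - N < √(N ^ 2 - 4 * p)) : 2 * e ≤ N - √(N ^ 2 - 4 * p) := by
  by_contra! h
  have habs : |2 * e - N| < √(N ^ 2 - 4 * p) := abs_lt.2 ⟨by linarith, hlt⟩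
  rw [Real.lt_sqrt (abs_nonneg _), sq_abs] at habs
  nlinarith

theorem mul_sq_le_sq_of_mul_sqrt_le {a b D : ℝ} (hb : 0 ≤ b) (hD : 0 ≤ D) (h : b * √D ≤ a) :
    b ^ 2 * D ≤ a ^ 2 := by
  have := pow_le_pow_left₀ (mul_nonneg hb (Real.sqrt_nonneg D)) h 2
  rwa [mul_pow, Real.sq_sqrt hD] at this

namespace SimpleGraph

variable {V : Type*} [Fintype V] [DecidableEq V] {G : SimpleGraph V} [DecidableRel G.Adj]
  {C : Finset V}

theorem IsClique.neighborFinset_inter_eq_erase (hC : G.IsClique (C : Set V)) {x : V}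
    (hx : x ∈ C) : G.neighborFinset x ∩ C = C.erase x := by
  ext w
  simp only [mem_inter, mem_neighborFinset, mem_erase]
  exact ⟨fun ⟨hxw, hw⟩ => ⟨hxw.ne', hw⟩, fun ⟨hwx, hw⟩ => ⟨hC hx hw hwx.symm, hw⟩⟩

theorem IsClique.inter_neighborFinset_inter_eq_erase (hC : G.IsClique (C : Set V)) {x x' : V}
    (hx : x ∈ C) (hx' : x' ∈ C) :
    G.neighborFinset x ∩ G.neighborFinset x' ∩ C = (C.erase x).erase x' := by
  rw [inter_assoc, hC.neighborFinset_inter_eq_erase hx', inter_erase,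
    hC.neighborFinset_inter_eq_erase hx]

theorem IsClique.card_neighborFinset_sdiff_add (hC : G.IsClique (C : Set V)) {x : V}
    (hx : x ∈ C) : #(G.neighborFinset x \ C) + #C = G.degree x + 1 := by
  have := card_inter_add_card_sdiff (G.neighborFinset x) C
  rw [hC.neighborFinset_inter_eq_erase hx, card_neighborFinset_eq_degree] at this
  have := card_erase_add_one hx
  omega

theorem IsClique.card_inter_neighborFinset_sdiff_add (hC : G.IsClique (C : Set V)) {x x' : V}
    (hx : x ∈ C) (hx' : x' ∈ C) (hne : x ≠ x') :
    #((G.neighborFinset x ∩ G.neighborFinset x') \ C) + #C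
      = #(G.neighborFinset x ∩ G.neighborFinset x') + 2 := by
  have := card_inter_add_card_sdiff (G.neighborFinset x ∩ G.neighborFinset x') C
  rw [hC.inter_neighborFinset_inter_eq_erase hx hx'] at this
  have := card_erase_add_one (mem_erase.2 ⟨hne.symm, hx'⟩)
  have := card_erase_add_one hx
  omega

theorem IsClique.neighborFinset_inter_subset (hC : G.IsClique (C : Set V)) {y z : V}
    (hz : z ∈ C) (hyz : ¬G.Adj y z) :
    G.neighborFinset y ∩ C ⊆ G.neighborFinset y ∩ G.neighborFinset z := by
  intro x hx
  simp only [mem_inter, mem_neighborFinset] at hx ⊢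
  exact ⟨hx.1, hC hz hx.2 (by rintro rfl; exact hyz hx.1)⟩

theorem IsClique.card_neighborFinset_inter_le (hC : G.IsClique (C : Set V)) {μ : ℕ}
    (hμ : ∀ u w, u ≠ w → ¬G.Adj u w → (G.neighborFinset u ∩ G.neighborFinset w).Nonempty →
      #(G.neighborFinset u ∩ G.neighborFinset w) = μ)
    {y z : V} (hy : y ∉ C) (hz : z ∈ C) (hyz : ¬G.Adj y z)
    (hne : (G.neighborFinset y ∩ C).Nonempty) : #(G.neighborFinset y ∩ C) ≤ μ := by
  have hsub := hC.neighborFinset_inter_subset hz hyz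
  exact (card_le_card hsub).trans_eq (hμ y z (by rintro rfl; exact hy hz) hyz (hne.mono hsub))

theorem IsClique.sum_card_neighborFinset_inter_compl (hC : G.IsClique (C : Set V)) {k : ℕ}
    (hreg : G.IsRegularOfDegree k) :
    ∑ y ∈ Cᶜ, (#(G.neighborFinset y ∩ C) : ℝ) = #C * (k - #C + 1) := by
  have hcount : ∑ y ∈ Cᶜ, #(G.neighborFinset y ∩ C) = ∑ x ∈ C, #(G.neighborFinset x \ C) := by
    convert sum_card_bipartiteAbove_eq_sum_card_bipartiteBelow G.Adj (s := Cᶜ) (t := C)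
      using 3 with y _ x _
    · ext; simp [and_comm]
    · ext; simp [adj_comm, and_comm]
  calc ∑ y ∈ Cᶜ, (#(G.neighborFinset y ∩ C) : ℝ)
      = ∑ x ∈ C, (#(G.neighborFinset x \ C) : ℝ) := by exact_mod_cast hcount
    _ = ∑ x ∈ C, ((k : ℝ) - #C + 1) := sum_congr rfl fun x hx => by
      have := hC.card_neighborFinset_sdiff_add hx
      rw [hreg x] at this
      have : (#(G.neighborFinset x \ C) : ℝ) + #C = k + 1 := by exact_mod_cast this
      linarith
    _ = #C * (k - #C + 1) := by rw [sum_const, nsmul_eq_mul]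

theorem IsClique.sum_card_neighborFinset_inter_mul_sub_one (hC : G.IsClique (C : Set V))
    {lam : ℕ} (hlam : ∀ u w, G.Adj u w → #(G.neighborFinset u ∩ G.neighborFinset w) = lam) :
    ∑ y ∈ Cᶜ, (#(G.neighborFinset y ∩ C) : ℝ) * (#(G.neighborFinset y ∩ C) - 1)
      = #C * (#C - 1) * (lam - #C + 2) := by
  have hoff (s : Finset V) : (#s : ℝ) * (#s - 1) = #s.offDiag := by
    rw [offDiag_card, Nat.cast_sub (Nat.le_mul_self _)]
    push_cast
    ring
  have hcount : ∑ y ∈ Cᶜ, #(G.neighborFinset y ∩ C).offDiag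
      = ∑ p ∈ C.offDiag, #((G.neighborFinset p.1 ∩ G.neighborFinset p.2) \ C) := by
    convert sum_card_bipartiteAbove_eq_sum_card_bipartiteBelow
      (fun y (p : V × V) => G.Adj y p.1 ∧ G.Adj y p.2) (s := Cᶜ) (t := C.offDiag)
      using 3 with y _ p _
    · ext; simp only [mem_offDiag, mem_inter, mem_neighborFinset, mem_bipartiteAbove]; tauto
    · ext; simp only [mem_sdiff, mem_inter, mem_neighborFinset, mem_bipartiteBelow, mem_compl,
        adj_comm]; tauto
  calc ∑ y ∈ Cᶜ, (#(G.neighborFinset y ∩ C) : ℝ) * (#(G.neighborFinset y ∩ C) - 1)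
      = ∑ y ∈ Cᶜ, (#(G.neighborFinset y ∩ C).offDiag : ℝ) := sum_congr rfl fun y _ => hoff _
    _ = ∑ p ∈ C.offDiag, (#((G.neighborFinset p.1 ∩ G.neighborFinset p.2) \ C) : ℝ) := by
      exact_mod_cast hcount
    _ = ∑ p ∈ C.offDiag, ((lam : ℝ) - #C + 2) := sum_congr rfl fun p hp => by
      obtain ⟨hx, hx', hne⟩ := mem_offDiag.1 hp
      have := hC.card_inter_neighborFinset_sdiff_add hx hx' hne
      rw [hlam _ _ (hC hx hx' hne)] at this
      have : (#((G.neighborFinset p.1 ∩ G.neighborFinset p.2) \ C) : ℝ) + #C = lam + 2 := by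
        exact_mod_cast this
      linarith
    _ = #C * (#C - 1) * (lam - #C + 2) := by rw [sum_const, nsmul_eq_mul, ← hoff]

theorem IsClique.dotProduct_adjMatrix_mulVec (hC : G.IsClique (C : Set V)) {h : V → ℝ}
    (hh : ∀ u ∉ C, h u = 0) :
    h ⬝ᵥ G.adjMatrix ℝ *ᵥ h = (∑ u ∈ C, h u) ^ 2 - ∑ u ∈ C, h u ^ 2 := by
  have hsum (s : Finset V) : ∑ u ∈ s, h u = ∑ u ∈ s ∩ C, h u :=
    (sum_subset inter_subset_left fun u _ hu => hh u fun huC => hu (mem_inter.2 ⟨‹_›, huC⟩)).symm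
  have hrow : ∀ u ∈ C, (G.adjMatrix ℝ *ᵥ h) u = ∑ w ∈ C, h w - h u := fun u hu => by
    rw [adjMatrix_mulVec_apply, hsum, hC.neighborFinset_inter_eq_erase hu, sum_erase_eq_sub hu]
  rw [dotProduct, ← sum_subset (subset_univ C) fun u _ hu => by rw [hh u hu, zero_mul],
    sum_congr rfl fun u hu => by rw [hrow u hu]]
  simp only [mul_sub, sum_sub_distrib, sum_mul, sq]

theorem IsClique.quadratic_nonneg_of_posSemidef (hC : G.IsClique (C : Set V)) {m : ℝ}
    (hpsd : (G.adjMatrix ℝ + m • 1).PosSemidef) {y : V} (hy : y ∉ C) (α : ℝ) {h : V → ℝ}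
    (hh : ∀ u ∉ C, h u = 0) :
    0 ≤ m * α ^ 2 + 2 * α * ∑ u ∈ G.neighborFinset y ∩ C, h u + (∑ u ∈ C, h u) ^ 2
      + (m - 1) * ∑ u ∈ C, h u ^ 2 := by
  set x := Pi.single y α + h
  have hyN : y ∉ G.neighborFinset y := by simp
  have hcross : Pi.single y α ⬝ᵥ G.adjMatrix ℝ *ᵥ h = α * ∑ u ∈ G.neighborFinset y ∩ C, h u := by
    rw [single_dotProduct, adjMatrix_mulVec_apply, ← filter_mem_eq_inter,
      sum_filter_of_ne fun u _ hu => by_contra fun huC => hu (hh u huC)]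
  have hA : x ⬝ᵥ G.adjMatrix ℝ *ᵥ x = 2 * α * ∑ u ∈ G.neighborFinset y ∩ C, h u
      + ((∑ u ∈ C, h u) ^ 2 - ∑ u ∈ C, h u ^ 2) := by
    have hsymm : h ⬝ᵥ G.adjMatrix ℝ *ᵥ Pi.single y α = Pi.single y α ⬝ᵥ G.adjMatrix ℝ *ᵥ h := by
      rw [dotProduct_mulVec, dotProduct_comm, ← mulVec_transpose, transpose_adjMatrix]
    have hdiag : Pi.single y α ⬝ᵥ G.adjMatrix ℝ *ᵥ Pi.single y α = 0 := by
      rw [single_dotProduct, adjMatrix_mulVec_apply]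
      simp [hyN]
    rw [mulVec_add, dotProduct_add, add_dotProduct, add_dotProduct, hsymm, hdiag, hcross,
      hC.dotProduct_adjMatrix_mulVec hh]
    ring
  have hI : x ⬝ᵥ x = α ^ 2 + ∑ u ∈ C, h u ^ 2 := by
    have hhh : h ⬝ᵥ h = ∑ u ∈ C, h u ^ 2 := by
      rw [dotProduct, ← sum_subset (subset_univ C) fun u _ hu => by rw [hh u hu, zero_mul]]
      simp only [sq]
    rw [dotProduct_add, add_dotProduct, add_dotProduct, single_dotProduct, single_dotProduct,
      dotProduct_single, hh y hy, hhh, Pi.single_eq_same]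
    ring
  have := hpsd.dotProduct_mulVec_nonneg x
  rw [star_trivial, add_mulVec, dotProduct_add, smul_mulVec, one_mulVec, dotProduct_smul, hA,
    hI, smul_eq_mul] at this
  linarith

theorem IsClique.card_neighborFinset_inter_mul_le (hC : G.IsClique (C : Set V)) {m : ℝ}
    (hm : 1 ≤ m) (hpsd : (G.adjMatrix ℝ + m • 1).PosSemidef) {y : V} (hy : y ∉ C) :
    (#(G.neighborFinset y ∩ C) : ℝ) * (#C + m - 1 - #(G.neighborFinset y ∩ C))
      ≤ m * (m - 1) * (#C + m - 1) := by
  set e := (#(G.neighborFinset y ∩ C) : ℝ)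
  set t := (#C : ℝ) - e
  have hsplit (p q : ℝ) : ∑ u ∈ C, (if G.Adj y u then p else q) = e * p + t * q := by
    have hfilter : C.filter (G.Adj y) = G.neighborFinset y ∩ C := by ext; simp [and_comm]
    have hcard : (#(C.filter (G.Adj y)) : ℝ) + #(C.filter fun u => ¬G.Adj y u) = #C := by
      exact_mod_cast card_filter_add_card_filter_not (s := C) (G.Adj y)
    rw [hfilter] at hcard
    rw [sum_ite, sum_const, sum_const, nsmul_eq_mul, nsmul_eq_mul, hfilter]
    linear_combination q * hcard
  have hquad (x : ℝ) :
      0 ≤ m * e * (m - 1) * (e + m) * (x * x) + 2 * m ^ 2 * e * t * x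
        + m ^ 2 * t * (t + m - 1) := by
    have := hC.quadratic_nonneg_of_posSemidef hpsd hy (-e * x)
      (h := fun u => if u ∈ C then (if G.Adj y u then m * x else m) else 0)
      fun u hu => if_neg hu
    have hS : ∑ u ∈ G.neighborFinset y ∩ C,
        (if u ∈ C then (if G.Adj y u then m * x else m) else 0) = e * (m * x) := by
      have hval : ∀ u ∈ G.neighborFinset y ∩ C,
          (if u ∈ C then (if G.Adj y u then m * x else m) else 0) = m * x := fun u hu => by
        rw [mem_inter, mem_neighborFinset] at hu
        rw [if_pos hu.2, if_pos hu.1]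
      rw [sum_congr rfl hval, sum_const, nsmul_eq_mul]
    have hC1 : ∑ u ∈ C, (if u ∈ C then (if G.Adj y u then m * x else m) else 0) =
        e * (m * x) + t * m := by
      rw [sum_congr rfl fun u hu => if_pos hu, hsplit]
    have hC2 : ∑ u ∈ C, (if u ∈ C then (if G.Adj y u then m * x else m) else 0) ^ 2 =
        e * (m * x) ^ 2 + t * m ^ 2 := by
      rw [sum_congr rfl fun u hu => by rw [if_pos hu, apply_ite (· ^ 2)], hsplit]
    rw [hS, hC1, hC2] at this
    linarith
  -- The discriminant of `hquad` is `-4 m³ e t` times the slack of the claimed inequality.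
  have hdisc := discrim_le_zero hquad
  have hc : (#C : ℝ) = e + t := by ring
  have he : 0 ≤ e := Nat.cast_nonneg _
  have ht : 0 ≤ t := sub_nonneg.2 (Nat.cast_le.2 (card_le_card inter_subset_right))
  rw [hc]
  rw [discrim] at hdisc
  clear_value e t
  have hmain : 0 ≤ m ^ 3 * (e * t) * (m * (m - 1) * (e + t + m - 1) - e * (e + t + m - 1 - e)) := by
    linarith
  rcases (mul_nonneg he ht).lt_or_eq with het | het
  · nlinarith [nonneg_of_mul_nonneg_right hmain (mul_pos (pow_pos (by linarith) 3) het)]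
  · have hm1 : 0 ≤ m - 1 := sub_nonneg.2 hm
    rcases mul_eq_zero.1 het.symm with rfl | rfl
    · nlinarith [mul_nonneg (mul_nonneg (zero_le_one.trans hm) hm1) (by linarith : 0 ≤ t + m - 1)]
    · nlinarith [mul_nonneg hm1 (mul_nonneg hm1 (by linarith : 0 ≤ e + m))]

theorem IsClique.two_mul_card_neighborFinset_inter_le (hC : G.IsClique (C : Set V)) {m : ℝ}
    (hm : 1 ≤ m) (hpsd : (G.adjMatrix ℝ + m • 1).PosSemidef) {y : V} (hy : y ∉ C) {μ : ℝ}
    (heμ : #(G.neighborFinset y ∩ C) ≤ μ)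
    (hμ : 2 * μ - (#C + m - 1) < √((#C + m - 1) * (#C - (m - 1) * (4 * m - 1)))) :
    2 * #(G.neighborFinset y ∩ C)
      ≤ #C + m - 1 - √((#C + m - 1) * (#C - (m - 1) * (4 * m - 1))) := by
  have hD : ((#C : ℝ) + m - 1) * (#C - (m - 1) * (4 * m - 1))
      = (#C + m - 1) ^ 2 - 4 * (m * (m - 1) * (#C + m - 1)) := by ring
  rw [hD] at hμ ⊢
  exact two_mul_le_sub_sqrt_of_mul_sub_le (hC.card_neighborFinset_inter_mul_le hm hpsd hy)
    (by linarith)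

end SimpleGraph

open SimpleGraph

theorem maximal_clique_polynomial_nonneg_general {V : Type*} [Fintype V] [DecidableEq V]
    (G : SimpleGraph V) [DecidableRel G.Adj] (k lam μ : ℕ) (m : ℝ) (hm : 1 ≤ m)
    (hreg : G.IsRegularOfDegree k)
    (hlam : ∀ u w : V, G.Adj u w → (G.neighborFinset u ∩ G.neighborFinset w).card = lam)
    (hμ : ∀ u w : V, u ≠ w → ¬G.Adj u w → (G.neighborFinset u ∩ G.neighborFinset w).Nonempty →
      (G.neighborFinset u ∩ G.neighborFinset w).card = μ)
    (hspec : IsLeast (spectrum ℝ (G.adjMatrix ℝ)) (-m))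
    (hμm : m * (m - 1) < (μ : ℝ))
    (C : Finset V) (hclique : G.IsClique (C : Set V))
    (hmax : ∀ y ∉ C, ∃ z ∈ C, ¬G.Adj y z)
    (c : ℕ) (hc : C.card = c)
    (hcbig : (μ : ℝ) ^ 2 / ((μ : ℝ) - m * (m - 1)) - m + 1 < (c : ℝ)) :
    0 ≤ (((c : ℝ) + m - 3) * ((k : ℝ) - c + 1) -
          2 * ((c : ℝ) - 1) * ((lam : ℝ) - c + 2)) ^ 2 -
        ((k : ℝ) - c + 1) ^ 2 * (((c : ℝ) + m - 1) *
          ((c : ℝ) - (m - 1) * (4 * m - 1))) := by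
  subst hc
  have hpsd := (isHermitian_adjMatrix ℝ G).posSemidef_add_smul_one fun x hx => hspec.2 hx
  set D := ((#C : ℝ) + m - 1) * (#C - (m - 1) * (4 * m - 1))
  have hμD : (2 * μ - (#C + m - 1)) ^ 2 < D := by
    have := (div_lt_iff₀ (sub_pos.2 hμm)).1
      (by linarith : (μ : ℝ) ^ 2 / (μ - m * (m - 1)) < #C + m - 1)
    nlinarith
  have hμs : 2 * μ - (#C + m - 1) < √D :=
    (abs_lt.1 ((Real.lt_sqrt (abs_nonneg _)).2 (by rwa [sq_abs]))).2
  have hvertex : ∀ y ∈ Cᶜ, (#(G.neighborFinset y ∩ C) : ℝ) * (#(G.neighborFinset y ∩ C) - 1)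
      ≤ ((#C + m - 1 - √D) / 2 - 1) * #(G.neighborFinset y ∩ C) := by
    intro y hy
    rw [mem_compl] at hy
    rcases (G.neighborFinset y ∩ C).eq_empty_or_nonempty with he | he
    · simp [he]
    obtain ⟨z, hz, hyz⟩ := hmax y hy
    have heμ := hclique.card_neighborFinset_inter_le hμ hy hz hyz he
    have := hclique.two_mul_card_neighborFinset_inter_le hm hpsd hy (by exact_mod_cast heμ) hμs
    nlinarith [(Nat.cast_nonneg _ : (0 : ℝ) ≤ #(G.neighborFinset y ∩ C))]
  have hsum := sum_le_sum hvertex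
  rw [← mul_sum, hclique.sum_card_neighborFinset_inter_mul_sub_one hlam,
    hclique.sum_card_neighborFinset_inter_compl hreg] at hsum
  have hc0 : (0 : ℝ) < #C := by
    by_contra! h
    rw [le_antisymm h (Nat.cast_nonneg _)] at hμD
    nlinarith [sq_nonneg (2 * μ - (m - 1)), sq_nonneg (m - 1)]
  have hk : 0 ≤ (k : ℝ) - #C + 1 := nonneg_of_mul_nonneg_right
    (hclique.sum_card_neighborFinset_inter_compl hreg ▸ sum_nonneg fun _ _ => Nat.cast_nonneg _) hc0
  exact sub_nonneg.2 (mul_sq_le_sq_of_mul_sqrt_le hk (by nlinarith) (by nlinarith))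

/-- Lemma 3.7: let `Γ` be amply regular with parameters `(v,k,λ,μ)`, smallest adjacency
eigenvalue `-m` with `m ≥ 1`, and `μ > m(m-1)`. If `Γ` has a maximal clique of order
`c > μ²/(μ - m(m-1)) - m + 1` with `c - 1 < k`, then the maximal-clique polynomial is
nonnegative at `c`:
`((c+m-3)(k-c+1) - 2(c-1)(λ-c+2))² - (k-c+1)²(c+m-1)(c-(m-1)(4m-1)) ≥ 0`. -/
theorem maximal_clique_polynomial_nonneg {V : Type*} [Fintype V] [DecidableEq V]
    (G : SimpleGraph V) [DecidableRel G.Adj] (v k lam μ : ℕ) (m : ℝ) (hm : 1 ≤ m)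
    (hv : Fintype.card V = v)
    (hreg : G.IsRegularOfDegree k)
    (hlam : ∀ u w : V, G.Adj u w → (G.neighborFinset u ∩ G.neighborFinset w).card = lam)
    (hμ : ∀ u w : V, u ≠ w → ¬G.Adj u w → (G.neighborFinset u ∩ G.neighborFinset w).Nonempty →
      (G.neighborFinset u ∩ G.neighborFinset w).card = μ)
    (hspec : IsLeast (spectrum ℝ (G.adjMatrix ℝ)) (-m))
    (hμm : m * (m - 1) < (μ : ℝ))
    (C : Finset V) (hclique : G.IsClique (C : Set V))
    (hmax : ∀ y ∉ C, ∃ z ∈ C, ¬G.Adj y z)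
    (c : ℕ) (hc : C.card = c)
    (hcbig : (μ : ℝ) ^ 2 / ((μ : ℝ) - m * (m - 1)) - m + 1 < (c : ℝ))
    (hck : c - 1 < k) :
    0 ≤ (((c : ℝ) + m - 3) * ((k : ℝ) - c + 1) -
          2 * ((c : ℝ) - 1) * ((lam : ℝ) - c + 2)) ^ 2 -
        ((k : ℝ) - c + 1) ^ 2 * (((c : ℝ) + m - 1) *
          ((c : ℝ) - (m - 1) * (4 * m - 1))) :=
  maximal_clique_polynomial_nonneg_general G k lam μ m hm hreg hlam hμ hspec hμm C hclique hmax c hc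
    hcbig
end

section
/- Let Γ be a k-regular graph on v vertices with smallest adjacency eigenvalue -m. Then any coclique in Γ has order at most v·m/(k+m) (the Hoffman bound). -/
/-!
Since `-m` is the least eigenvalue of the symmetric matrix `A = adjMatrix G`, the Rayleigh
quotient gives `xᵀ A x ≥ -m xᵀ x` for every real vector `x`. Take `x = v χ_s - |s| 𝟙`, the
indicator of the coclique made orthogonal to `𝟙`. Regularity and independence of `s` give
`xᵀ A x = -k v |s|²`, while `xᵀ x = v |s| (v - |s|)`; hence `k |s| ≤ m (v - |s|)`.
-/

open Matrix

namespace Matrix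

variable {n : Type*} [Fintype n] [DecidableEq n]

theorem IsHermitian.mul_dotProduct_self_le_dotProduct_mulVec {A : Matrix n n ℝ}
    (hA : A.IsHermitian) {a : ℝ} (ha : a ∈ lowerBounds (spectrum ℝ A)) (x : n → ℝ) :
    a * (x ⬝ᵥ x) ≤ x ⬝ᵥ A *ᵥ x := by
  have hpsd : (A - algebraMap ℝ _ a).PosSemidef := by
    refine posSemidef_iff_isHermitian_and_spectrum_nonneg.mpr ⟨?_, ?_⟩
    · exact hA.sub (by simp [algebraMap_eq_diagonal])
    · rw [← spectrum.sub_singleton_eq]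
      rintro _ ⟨μ, hμ, _, rfl, rfl⟩
      exact sub_nonneg.mpr (ha hμ)
  have := hpsd.dotProduct_mulVec_nonneg x
  rw [star_trivial, sub_mulVec, dotProduct_sub, Algebra.algebraMap_eq_smul_one, smul_mulVec,
    one_mulVec, dotProduct_smul, smul_eq_mul, sub_nonneg] at this
  linarith

end Matrix

namespace Finset

variable {V α : Type*} [Fintype V]

theorem indicator_one_dotProduct [NonAssocSemiring α] (s : Finset V) (x : V → α) :
    (s : Set V).indicator 1 ⬝ᵥ x = ∑ i ∈ s, x i := by
  classical
  simp only [dotProduct, Set.indicator_apply, mem_coe, Pi.one_apply, ite_mul, one_mul, zero_mul,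
    sum_ite_mem, univ_inter]

theorem dotProduct_indicator_one [CommSemiring α] (s : Finset V) (x : V → α) :
    x ⬝ᵥ (s : Set V).indicator 1 = ∑ i ∈ s, x i := by
  rw [dotProduct_comm, indicator_one_dotProduct]

variable [CommRing α]

noncomputable def balancedIndicator (s : Finset V) : V → α :=
  (Fintype.card V : α) • (s : Set V).indicator 1 - (s.card : α) • 1

theorem balancedIndicator_dotProduct_self (s : Finset V) :
    s.balancedIndicator (α := α) ⬝ᵥ s.balancedIndicator =
      Fintype.card V * s.card * (Fintype.card V - s.card) := by
  classical
  have hχχ : (s : Set V).indicator (1 : V → α) ⬝ᵥ (s : Set V).indicator 1 = s.card := by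
    simp [indicator_one_dotProduct, Set.indicator_apply]
  have hχ1 : (s : Set V).indicator (1 : V → α) ⬝ᵥ 1 = s.card := by
    simp [indicator_one_dotProduct]
  have h1χ : (1 : V → α) ⬝ᵥ (s : Set V).indicator 1 = s.card := by
    simp [dotProduct_indicator_one]
  simp only [balancedIndicator, dotProduct_sub, sub_dotProduct, dotProduct_smul,
    smul_dotProduct, hχχ, hχ1, h1χ, one_dotProduct_one, smul_eq_mul]
  ring

end Finset

namespace SimpleGraph

variable {V α : Type*} [Fintype V] {G : SimpleGraph V} [DecidableRel G.Adj]

theorem IsIndepSet.indicator_dotProduct_adjMatrix_mulVec [NonAssocSemiring α] {s : Set V}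
    (hs : G.IsIndepSet s) : s.indicator 1 ⬝ᵥ G.adjMatrix α *ᵥ s.indicator 1 = 0 := by
  rw [dotProduct_mulVec_adjMatrix]
  refine Finset.sum_eq_zero fun i _ => Finset.sum_eq_zero fun j _ =>
    ite_eq_right_iff.mpr fun hij => ?_
  by_cases hi : i ∈ s
  · rw [Set.indicator_of_notMem fun hj => hs hi hj (G.ne_of_adj hij) hij, mul_zero]
  · rw [Set.indicator_of_notMem hi, zero_mul]

theorem IsRegularOfDegree.adjMatrix_mulVec_one [NonAssocSemiring α] {k : ℕ}
    (hG : G.IsRegularOfDegree k) : G.adjMatrix α *ᵥ 1 = (k : α) • 1 := by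
  ext i
  simp [hG i]

theorem IsRegularOfDegree.one_vecMul_adjMatrix [NonAssocSemiring α] {k : ℕ}
    (hG : G.IsRegularOfDegree k) : 1 ᵥ* G.adjMatrix α = (k : α) • 1 := by
  ext i
  simp [hG i]

variable [CommRing α] {k : ℕ}

theorem IsRegularOfDegree.balancedIndicator_dotProduct_adjMatrix_mulVec {s : Finset V}
    (hG : G.IsRegularOfDegree k) (hs : G.IsIndepSet (s : Set V)) :
    s.balancedIndicator ⬝ᵥ G.adjMatrix α *ᵥ s.balancedIndicator =
      -(k * Fintype.card V * s.card ^ 2) := by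
  unfold Finset.balancedIndicator
  set χ : V → α := (s : Set V).indicator 1
  have hχχ : χ ⬝ᵥ G.adjMatrix α *ᵥ χ = 0 := hs.indicator_dotProduct_adjMatrix_mulVec
  have hχ1 : χ ⬝ᵥ G.adjMatrix α *ᵥ 1 = k * s.card := by
    simp [χ, hG.adjMatrix_mulVec_one, Finset.indicator_one_dotProduct]
  have h1χ : 1 ⬝ᵥ G.adjMatrix α *ᵥ χ = k * s.card := by
    simp [χ, dotProduct_mulVec, hG.one_vecMul_adjMatrix, Finset.dotProduct_indicator_one,
      mul_comm]
  have h11 : 1 ⬝ᵥ G.adjMatrix α *ᵥ 1 = k * Fintype.card V := by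
    simp [hG.adjMatrix_mulVec_one]
  simp only [mulVec_sub, mulVec_smul, dotProduct_sub, sub_dotProduct, dotProduct_smul,
    smul_dotProduct, hχχ, hχ1, h1χ, h11, smul_eq_mul]
  ring

end SimpleGraph

theorem hoffman_bound_general {V : Type*} [Fintype V] [DecidableEq V]
    (G : SimpleGraph V) [DecidableRel G.Adj] (v k : ℕ) (m : ℝ)
    (hv : Fintype.card V = v) (hm : 0 < m)
    (hreg : G.IsRegularOfDegree k)
    (hspec : IsLeast (spectrum ℝ (G.adjMatrix ℝ)) (-m))
    (s : Finset V) (hindep : (s : Set V).Pairwise fun u w => ¬G.Adj u w) :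
    (s.card : ℝ) ≤ (v : ℝ) * m / ((k : ℝ) + m) := by
  have hrayleigh := (G.isHermitian_adjMatrix ℝ).mul_dotProduct_self_le_dotProduct_mulVec
    hspec.2 s.balancedIndicator
  rw [s.balancedIndicator_dotProduct_self,
    hreg.balancedIndicator_dotProduct_adjMatrix_mulVec hindep, hv] at hrayleigh
  rw [le_div_iff₀ (by positivity)]
  obtain hs | hs := (Nat.cast_nonneg (α := ℝ) s.card).eq_or_lt
  · rw [← hs, zero_mul]
    positivity
  have hvs : (0 : ℝ) < v * s.card :=
    mul_pos (hs.trans_le (by exact_mod_cast hv ▸ s.card_le_univ)) hs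
  refine le_of_mul_le_mul_left ?_ hvs
  linarith

/-- The Hoffman bound: let `Γ` be a `k`-regular graph on `v` vertices (`k > 0`) with
smallest adjacency eigenvalue `-m` (`m > 0`). Then any coclique of `Γ` has order at most
`v·m/(k+m)`. -/
theorem hoffman_bound {V : Type*} [Fintype V] [DecidableEq V]
    (G : SimpleGraph V) [DecidableRel G.Adj] (v k : ℕ) (m : ℝ)
    (hv : Fintype.card V = v) (hk : 0 < k) (hm : 0 < m)
    (hreg : G.IsRegularOfDegree k)
    (hspec : IsLeast (spectrum ℝ (G.adjMatrix ℝ)) (-m))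
    (s : Finset V) (hindep : (s : Set V).Pairwise fun u w => ¬G.Adj u w) :
    (s.card : ℝ) ≤ (v : ℝ) * m / ((k : ℝ) + m) :=
  hoffman_bound_general G v k m hv hm hreg hspec s hindep
end
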